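/- arXiv:1306.6763 — 3 statements merged into one kernel-verified Lean document; each statement's English description precedes it below -/
import Mathlib

section
/- For any point a in the closed unit ball of ℝ^5, the integral over the unit sphere S^4 of |x - a| with respect to 4-dimensional Hausdorff measure is minimized exactly when a = 0. -/
/-!
The reflection `x ↦ -x` preserves the surface measure, so `∫ ‖x - a‖ = ∫ ‖x + a‖`, and the triangle
inequality `‖x - a‖ + ‖x + a‖ ≥ ‖2 • x‖ = 2` gives `∫ ‖x - a‖ ≥ ∫ ‖x‖`. In a strictly convex space
equality forces `x - a` and `x + a` onto a common ray for almost every `x`; for `a ≠ 0` this puts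
almost all of the sphere on the line `ℝ ∙ a`, which is `μH[4]`-null, while the sphere has positive
measure. Finiteness and positivity of `μH[4]` on the sphere come from stereographic projection,
which is Lipschitz in both directions between a closed hemisphere and a ball in the hyperplane,
where `μH[4]` is a Haar measure.
-/

open MeasureTheory Metric Module
open scoped ENNReal NNReal RealInnerProductSpace

section NegInvariant

variable {E : Type*} [NormedAddCommGroup E] [MeasurableSpace E] {μ : Measure E}

theorem integral_norm_sub_eq_integral_norm_add [BorelSpace E] [μ.IsNegInvariant] (a : E) :
    ∫ x, ‖x - a‖ ∂μ = ∫ x, ‖x + a‖ ∂μ := by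
  rw [← integral_neg_eq_self]
  simp_rw [← norm_neg (-_ - a), neg_sub, sub_neg_eq_add, add_comm]

theorem integrable_norm_sub [IsFiniteMeasure μ] (hμ : Integrable (fun x => x) μ) (a : E) :
    Integrable (fun x => ‖x - a‖) μ :=
  (hμ.sub (integrable_const a)).norm

theorem integrable_norm_sub_add_norm_add [IsFiniteMeasure μ] (hμ : Integrable (fun x => x) μ)
    (a : E) : Integrable (fun x => ‖x - a‖ + ‖x + a‖) μ :=
  (integrable_norm_sub hμ a).add (by simpa using integrable_norm_sub hμ (-a))

theorem integral_norm_sub_add_norm_add [BorelSpace E] [IsFiniteMeasure μ] [μ.IsNegInvariant]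
    (hμ : Integrable (fun x => x) μ) (a : E) :
    ∫ x, (‖x - a‖ + ‖x + a‖) ∂μ = 2 * ∫ x, ‖x - a‖ ∂μ := by
  rw [integral_add (integrable_norm_sub hμ a) (by simpa using integrable_norm_sub hμ (-a)),
    ← integral_norm_sub_eq_integral_norm_add, two_mul]

theorem integral_norm_sub_add_add [NormedSpace ℝ E] (a : E) :
    ∫ x, ‖(x - a) + (x + a)‖ ∂μ = 2 * ∫ x, ‖x‖ ∂μ := by
  simp_rw [sub_add_add_cancel, ← two_smul ℝ, norm_smul, Real.norm_two, integral_const_mul]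

theorem integral_norm_le_integral_norm_sub [NormedSpace ℝ E] [BorelSpace E] [IsFiniteMeasure μ]
    [μ.IsNegInvariant] (hμ : Integrable (fun x => x) μ) (a : E) :
    ∫ x, ‖x‖ ∂μ ≤ ∫ x, ‖x - a‖ ∂μ := by
  have h : ∫ x, ‖(x - a) + (x + a)‖ ∂μ ≤ ∫ x, (‖x - a‖ + ‖x + a‖) ∂μ :=
    integral_mono (by simpa using (hμ.add hμ).norm) (integrable_norm_sub_add_norm_add hμ a)
      fun x => norm_add_le _ _
  rw [integral_norm_sub_add_add, integral_norm_sub_add_norm_add hμ] at h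
  linarith

theorem ae_sameRay_sub_add_of_integral_norm_sub_eq [NormedSpace ℝ E] [StrictConvexSpace ℝ E]
    [BorelSpace E] [IsFiniteMeasure μ] [μ.IsNegInvariant] (hμ : Integrable (fun x => x) μ)
    {a : E} (h : ∫ x, ‖x - a‖ ∂μ = ∫ x, ‖x‖ ∂μ) : ∀ᵐ x ∂μ, SameRay ℝ (x - a) (x + a) := by
  have heq : ∫ x, ‖(x - a) + (x + a)‖ ∂μ = ∫ x, (‖x - a‖ + ‖x + a‖) ∂μ := by
    rw [integral_norm_sub_add_add, integral_norm_sub_add_norm_add hμ, h]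
  have hae := (integral_eq_iff_of_ae_le (by simpa using (hμ.add hμ).norm)
    (integrable_norm_sub_add_norm_add hμ a) (ae_of_all _ fun x => norm_add_le _ _)).1 heq
  exact hae.mono fun x hx => sameRay_iff_norm_add.2 hx

theorem mem_span_singleton_of_sameRay_sub_add {V : Type*} [AddCommGroup V] [Module ℝ V]
    {a x : V} (ha : a ≠ 0) (h : SameRay ℝ (x - a) (x + a)) : x ∈ ℝ ∙ a := by
  obtain ⟨s, t, -, -, -, hs, ht⟩ := h.exists_eq_smul_add
  have hax : a = (t - s) • x := by
    rw [sub_add_add_cancel, ← two_smul ℝ, smul_smul] at hs ht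
    linear_combination (norm := module) (2⁻¹ : ℝ) • ht - (2⁻¹ : ℝ) • hs
  have hts : t - s ≠ 0 := fun h0 => ha (by rw [hax, h0, zero_smul])
  exact Submodule.mem_span_singleton.2
    ⟨(t - s)⁻¹, by rw [hax, smul_smul, inv_mul_cancel₀ hts, one_smul]⟩

theorem integral_norm_sub_eq_integral_norm_iff [NormedSpace ℝ E] [StrictConvexSpace ℝ E]
    [BorelSpace E] [IsFiniteMeasure μ] [μ.IsNegInvariant] (hμ : Integrable (fun x => x) μ)
    (hμ₀ : μ ≠ 0) (hline : ∀ a : E, μ (ℝ ∙ a) = 0) (a : E) :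
    ∫ x, ‖x - a‖ ∂μ = ∫ x, ‖x‖ ∂μ ↔ a = 0 := by
  refine ⟨fun h => ?_, fun ha => by simp [ha]⟩
  by_contra ha
  have hfalse : ∀ᵐ x ∂μ, False :=
    ((ae_sameRay_sub_add_of_integral_norm_sub_eq hμ h).and
      (measure_eq_zero_iff_ae_notMem.1 (hline a))).mono
      fun x ⟨hray, hx⟩ => hx (mem_span_singleton_of_sameRay_sub_add ha hray)
  exact hμ₀ (ae_eq_bot.1 (Filter.eventually_false_iff_eq_bot.1 hfalse))

end NegInvariant

theorem hausdorffMeasure_span_singleton_eq_zero {E : Type*} [NormedAddCommGroup E]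
    [NormedSpace ℝ E] [MeasurableSpace E] [BorelSpace E] {d : ℝ} (hd : 1 < d) (a : E) :
    μH[d] (ℝ ∙ a : Set E) = 0 := by
  lift d to ℝ≥0 using zero_le_one.trans hd.le
  apply hausdorffMeasure_of_dimH_lt
  calc dimH (ℝ ∙ a : Set E) ≤ dimH (Set.univ : Set ℝ) := by
        rw [Submodule.span_singleton_eq_range]
        exact (ContinuousLinearMap.toSpanSingleton ℝ a).lipschitz.dimH_range_le
    _ < d := by rw [Real.dimH_univ]; exact_mod_cast hd

section Sphere

variable {E : Type*} [NormedAddCommGroup E] [InnerProductSpace ℝ E] {v : E}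

def lowerHemisphere (v : E) : Set E := sphere 0 1 ∩ {x | ⟪v, x⟫ ≤ 0}

theorem inner_stereoInvFunAux_nonpos (hv : ‖v‖ = 1) {w : E} (hw : w ∈ (ℝ ∙ v)ᗮ)
    (hw2 : ‖w‖ ≤ 2) : ⟪v, stereoInvFunAux v w⟫ ≤ 0 := by
  rw [Submodule.mem_orthogonal_singleton_iff_inner_right] at hw
  simp only [stereoInvFunAux_apply, inner_smul_right, inner_add_right, hw,
    real_inner_self_eq_norm_sq, hv]
  exact mul_nonpos_of_nonneg_of_nonpos (by positivity) (by nlinarith [norm_nonneg w])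

theorem norm_stereoToFun_le {x : E} (hx : ‖x‖ = 1) (hvx : ⟪v, x⟫ ≤ 0) :
    ‖stereoToFun v x‖ ≤ 2 := by
  have hpos : 0 < 1 - ⟪v, x⟫ := by linarith
  rw [stereoToFun_apply, norm_smul, innerSL_apply_apply, Real.norm_eq_abs,
    abs_of_pos (by positivity)]
  calc 2 / (1 - ⟪v, x⟫) * ‖(ℝ ∙ v)ᗮ.orthogonalProjectionOnto x‖ ≤ 2 * 1 := by
        gcongr
        · exact div_le_self zero_le_two (by linarith)
        · exact ((ℝ ∙ v)ᗮ.norm_orthogonalProjectionOnto_apply_le x).trans hx.le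
    _ = 2 := mul_one 2

theorem lowerHemisphere_subset_image_stereoInvFunAux (hv : ‖v‖ = 1) :
    lowerHemisphere v ⊆ (fun w : (ℝ ∙ v)ᗮ => stereoInvFunAux v w) '' closedBall 0 2 := by
  rintro x ⟨hx, hvx : ⟪v, x⟫ ≤ 0⟩
  rw [mem_sphere_zero_iff_norm] at hx
  have hxv : x ≠ v := by
    rintro rfl
    rw [real_inner_self_eq_norm_sq, hv] at hvx
    norm_num at hvx
  refine ⟨stereoToFun v x, mem_closedBall_zero_iff.2 (norm_stereoToFun_le hx hvx), ?_⟩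
  exact congrArg Subtype.val (stereo_left_inv hv (x := ⟨x, mem_sphere_zero_iff_norm.2 hx⟩) hxv)

theorem closedBall_subset_image_stereoToFun (hv : ‖v‖ = 1) :
    closedBall (0 : (ℝ ∙ v)ᗮ) 2 ⊆ stereoToFun v '' lowerHemisphere v := by
  intro w hw
  refine ⟨stereoInvFun hv w, ⟨(stereoInvFun hv w).2, ?_⟩, stereo_right_inv hv w⟩
  exact inner_stereoInvFunAux_nonpos hv w.2 (mem_closedBall_zero_iff.1 hw)

theorem sphere_subset_lowerHemisphere_union (v : E) :
    sphere (0 : E) 1 ⊆ lowerHemisphere v ∪ lowerHemisphere (-v) := by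
  intro x hx
  rcases le_total ⟪v, x⟫ 0 with h | h
  · exact Or.inl ⟨hx, h⟩
  · exact Or.inr ⟨hx, by simpa [inner_neg_left] using h⟩

variable [FiniteDimensional ℝ E] [MeasurableSpace E] [BorelSpace E]

theorem isAddHaarMeasure_hausdorffMeasure_orthogonal {n : ℕ} (hn : finrank ℝ E = n + 1)
    (hv : ‖v‖ = 1) : (μH[n] : Measure (ℝ ∙ v)ᗮ).IsAddHaarMeasure := by
  have : Fact (finrank ℝ E = n + 1) := ⟨hn⟩
  have hv₀ : v ≠ 0 := norm_ne_zero_iff.1 (by simp [hv])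
  rw [← Submodule.finrank_orthogonal_span_singleton (𝕜 := ℝ) (n := n) hv₀]
  infer_instance

theorem hausdorffMeasure_lowerHemisphere_lt_top {n : ℕ} (hn : finrank ℝ E = n + 1)
    (hv : ‖v‖ = 1) : μH[n] (lowerHemisphere v) < ∞ := by
  have := isAddHaarMeasure_hausdorffMeasure_orthogonal hn hv
  obtain ⟨K, hK⟩ : ∃ K, LipschitzOnWith K (fun w : (ℝ ∙ v)ᗮ => stereoInvFunAux v w)
      (closedBall 0 2) :=
    (contDiff_stereoInvFunAux.comp (ℝ ∙ v)ᗮ.subtypeL.contDiff).contDiffOn.exists_lipschitzOnWith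
      one_ne_zero (convex_closedBall 0 2) (isCompact_closedBall 0 2)
  calc μH[n] (lowerHemisphere v)
      ≤ μH[n] ((fun w : (ℝ ∙ v)ᗮ => stereoInvFunAux v w) '' closedBall 0 2) :=
        measure_mono (lowerHemisphere_subset_image_stereoInvFunAux hv)
    _ ≤ (K : ℝ≥0∞) ^ (n : ℝ) * μH[n] (closedBall (0 : (ℝ ∙ v)ᗮ) 2) :=
        hK.hausdorffMeasure_image_le n.cast_nonneg
    _ < ∞ := ENNReal.mul_lt_top (by simp) (isCompact_closedBall 0 2).measure_lt_top

theorem hausdorffMeasure_lowerHemisphere_pos {n : ℕ} (hn : finrank ℝ E = n + 1)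
    (hv : ‖v‖ = 1) : 0 < μH[n] (lowerHemisphere v) := by
  have := isAddHaarMeasure_hausdorffMeasure_orthogonal hn hv
  set K : Set E := closedBall 0 1 ∩ {x | ⟪v, x⟫ ≤ 0}
  have hHK : lowerHemisphere v ⊆ K := fun x ⟨hx, hvx⟩ => ⟨sphere_subset_closedBall hx, hvx⟩
  obtain ⟨C, hC⟩ : ∃ C, LipschitzOnWith C (stereoToFun v) K := by
    refine ContDiffOn.exists_lipschitzOnWith (n := 1) ?_ one_ne_zero ?_ ?_
    · exact contDiffOn_stereoToFun.mono fun x ⟨_, hvx⟩ => by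
        simp only [innerSL_apply_apply]; exact (hvx.trans_lt zero_lt_one).ne
    · exact (convex_closedBall 0 1).inter (convex_halfSpace_le (innerSL ℝ v).isLinear 0)
    · exact (isCompact_closedBall 0 1).inter_right
        (isClosed_le (innerSL ℝ v).continuous continuous_const)
  have hpos : 0 < μH[n] (closedBall (0 : (ℝ ∙ v)ᗮ) 2) := measure_closedBall_pos _ _ two_pos
  have hbound : 0 < (C : ℝ≥0∞) ^ (n : ℝ) * μH[n] (lowerHemisphere v) :=
    hpos.trans_le <| (measure_mono (closedBall_subset_image_stereoToFun hv)).trans <|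
      (hC.mono hHK).hausdorffMeasure_image_le n.cast_nonneg
  exact (ENNReal.mul_pos_iff.1 hbound).2

theorem hausdorffMeasure_sphere_lt_top {n : ℕ} (hn : finrank ℝ E = n + 1) :
    μH[n] (sphere (0 : E) 1) < ∞ := by
  have := Module.nontrivial_of_finrank_eq_succ hn
  obtain ⟨v, hv⟩ := exists_norm_eq E zero_le_one
  calc μH[n] (sphere (0 : E) 1) ≤ μH[n] (lowerHemisphere v ∪ lowerHemisphere (-v)) :=
        measure_mono (sphere_subset_lowerHemisphere_union v)
    _ ≤ μH[n] (lowerHemisphere v) + μH[n] (lowerHemisphere (-v)) := measure_union_le _ _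
    _ < ∞ := ENNReal.add_lt_top.2 ⟨hausdorffMeasure_lowerHemisphere_lt_top hn hv,
        hausdorffMeasure_lowerHemisphere_lt_top hn (by rwa [norm_neg])⟩

theorem hausdorffMeasure_sphere_pos {n : ℕ} (hn : finrank ℝ E = n + 1) :
    0 < μH[n] (sphere (0 : E) 1) := by
  have := Module.nontrivial_of_finrank_eq_succ hn
  obtain ⟨v, hv⟩ := exists_norm_eq E zero_le_one
  exact (hausdorffMeasure_lowerHemisphere_pos hn hv).trans_le (measure_mono Set.inter_subset_left)

end Sphere

theorem isNegInvariant_hausdorffMeasure_restrict_sphere {E : Type*} [NormedAddCommGroup E]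
    [MeasurableSpace E] [BorelSpace E] (d r : ℝ) :
    ((μH[d] : Measure E).restrict (sphere 0 r)).IsNegInvariant := by
  have hS : Neg.neg ⁻¹' sphere (0 : E) r = sphere 0 r := by simp
  have h : MeasurePreserving (Neg.neg : E → E)
      ((μH[d] : Measure E).restrict (Neg.neg ⁻¹' sphere 0 r)) ((μH[d] : Measure E).restrict
        (sphere 0 r)) :=
    ((IsometryEquiv.neg E).measurePreserving_hausdorffMeasure d).restrict_preimage
      isClosed_sphere.measurableSet
  rw [hS] at h
  exact ⟨h.map_eq⟩

theorem sphere_integral_dist_minimized_at_zero_general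
    (a : EuclideanSpace ℝ (Fin 5)) :
    (∫ x in sphere (0 : EuclideanSpace ℝ (Fin 5)) 1,
        ‖x - (0 : EuclideanSpace ℝ (Fin 5))‖ ∂(μH[4])) ≤
      (∫ x in sphere (0 : EuclideanSpace ℝ (Fin 5)) 1, ‖x - a‖ ∂(μH[4])) ∧
    ((∫ x in sphere (0 : EuclideanSpace ℝ (Fin 5)) 1, ‖x - a‖ ∂(μH[4])) =
        (∫ x in sphere (0 : EuclideanSpace ℝ (Fin 5)) 1,
          ‖x - (0 : EuclideanSpace ℝ (Fin 5))‖ ∂(μH[4])) ↔ a = 0) := by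
  have hdim : finrank ℝ (EuclideanSpace ℝ (Fin 5)) = 4 + 1 := by simp
  set μ : Measure (EuclideanSpace ℝ (Fin 5)) := μH[4].restrict (sphere 0 1)
  have : IsFiniteMeasure μ := isFiniteMeasure_restrict.2
    (by simpa using (hausdorffMeasure_sphere_lt_top hdim).ne)
  have : μ.IsNegInvariant := isNegInvariant_hausdorffMeasure_restrict_sphere 4 1
  have hμ : Integrable (fun x => x) μ :=
    .of_bound continuous_id.aestronglyMeasurable 1 <|
      (ae_restrict_mem isClosed_sphere.measurableSet).mono fun _ hx =>
        (mem_sphere_zero_iff_norm.1 hx).le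
  have hμ₀ : μ ≠ 0 := by
    simpa [μ] using (hausdorffMeasure_sphere_pos hdim).ne'
  have hline (b : EuclideanSpace ℝ (Fin 5)) : μ (ℝ ∙ b) = 0 :=
    Measure.absolutelyContinuous_of_le Measure.restrict_le_self
      (hausdorffMeasure_span_singleton_eq_zero (by norm_num) b)
  simp only [sub_zero]
  exact ⟨integral_norm_le_integral_norm_sub hμ a,
    integral_norm_sub_eq_integral_norm_iff hμ hμ₀ hline a⟩

/-- For any `a` in the closed unit ball of `ℝ^5`, the integral over the
unit sphere `S⁴` of `‖x - a‖` w.r.t. 4-dimensional Hausdorff measure is minimized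
exactly when `a = 0`. -/
theorem sphere_integral_dist_minimized_at_zero
    (a : EuclideanSpace ℝ (Fin 5)) (ha : a ∈ closedBall (0 : EuclideanSpace ℝ (Fin 5)) 1) :
    (∫ x in sphere (0 : EuclideanSpace ℝ (Fin 5)) 1,
        ‖x - (0 : EuclideanSpace ℝ (Fin 5))‖ ∂(μH[4])) ≤
      (∫ x in sphere (0 : EuclideanSpace ℝ (Fin 5)) 1, ‖x - a‖ ∂(μH[4])) ∧
    ((∫ x in sphere (0 : EuclideanSpace ℝ (Fin 5)) 1, ‖x - a‖ ∂(μH[4])) =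
        (∫ x in sphere (0 : EuclideanSpace ℝ (Fin 5)) 1,
          ‖x - (0 : EuclideanSpace ℝ (Fin 5))‖ ∂(μH[4])) ↔ a = 0) :=
  sphere_integral_dist_minimized_at_zero_general a
end

section
/- For any 2-form F with values in the skew-Hermitian traceless matrices su(n), defined pointwise on an oriented Riemannian 4-manifold (or at a single point of ℝ^4), the pointwise inequality |tr(F ∧ F)| ≤ |F|² dvol holds, where |F|² is the squared norm induced by the inner product ⟨A,B⟩ = -tr(AB) on su(n) and the standard norm on 2-forms. -/
open Matrix

/-- The coefficient of the real 4-form `tr(F ∧ F)` relative to the volume form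
`e⁰∧e¹∧e²∧e³`, for an antisymmetric family of matrix coefficients
`F i j` (representing `F = ∑_{i<j} F i j · eⁱ∧eʲ`). -/
noncomputable def trFF {n : ℕ} (F : Fin 4 → Fin 4 → Matrix (Fin n) (Fin n) ℂ) : ℝ :=
  (2 * ((F 0 1 * F 2 3).trace - (F 0 2 * F 1 3).trace + (F 0 3 * F 1 2).trace)).re

/-- The squared norm `|F|² = ∑_{i<j} ‖F i j‖²` of an `su(n)`-valued 2-form, with the
inner product `⟨A,B⟩ = -tr(AB)` on `su(n)`. -/
noncomputable def fnormSq {n : ℕ} (F : Fin 4 → Fin 4 → Matrix (Fin n) (Fin n) ℂ) : ℝ :=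
  (1 / 2) * ∑ i : Fin 4, ∑ j : Fin 4, (-(F i j * F i j).trace).re

lemma trace_mul_conjTranspose_re_nonneg {n : ℕ} (M : Matrix (Fin n) (Fin n) ℂ) :
    0 ≤ ((M * Mᴴ).trace).re := by
  rw [Matrix.trace]
  simp only [Matrix.diag, Matrix.mul_apply, Matrix.conjTranspose_apply]
  rw [Complex.re_sum]
  refine Finset.sum_nonneg fun i _ => ?_
  rw [Complex.re_sum]
  refine Finset.sum_nonneg fun j _ => ?_
  have := Complex.normSq_nonneg (M i j)
  simpa [Complex.mul_conj] using this

lemma key {n : ℕ} (A B : Matrix (Fin n) (Fin n) ℂ)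
    (hA : Aᴴ = -A) (hB : Bᴴ = -B) :
    |2 * ((A * B).trace).re| ≤ (-(A * A).trace).re + (-(B * B).trace).re := by
  have h1 := trace_mul_conjTranspose_re_nonneg (A - B)
  have h2 := trace_mul_conjTranspose_re_nonneg (A + B)
  have e1 : (A - B)ᴴ = -(A - B) := by rw [conjTranspose_sub, hA, hB]; abel
  have e2 : (A + B)ᴴ = -(A + B) := by rw [conjTranspose_add, hA, hB]; abel
  rw [e1] at h1; rw [e2] at h2
  have tBA : (B * A).trace = (A * B).trace := Matrix.trace_mul_comm B A
  have ex1 : (A - B) * -(A - B) = -(A*A) - (B*B) + (A*B) + (B*A) := by noncomm_ring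
  have ex2 : (A + B) * -(A + B) = -(A*A) - (B*B) - (A*B) - (B*A) := by noncomm_ring
  rw [ex1] at h1; rw [ex2] at h2
  simp only [Matrix.trace_add, Matrix.trace_sub, Matrix.trace_neg, tBA,
    Complex.add_re, Complex.sub_re, Complex.neg_re] at h1 h2
  simp only [Complex.neg_re]
  rw [abs_le]
  constructor <;> linarith

/-- For any `su(n)`-valued 2-form `F` on an oriented 4-dimensional inner
product space, the pointwise inequality `|tr(F ∧ F)| ≤ |F|² dvol` holds. -/
theorem abs_trFF_le_normSq {n : ℕ} (F : Fin 4 → Fin 4 → Matrix (Fin n) (Fin n) ℂ)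
    (hanti : ∀ i j, F j i = -F i j)
    (hskew : ∀ i j, (F i j)ᴴ = -(F i j))
    (htraceless : ∀ i j, (F i j).trace = 0) :
    |trFF F| ≤ fnormSq F := by
  have hdiag : ∀ i, F i i = 0 := by
    intro i
    have := hanti i i
    have : (2 : ℂ) • F i i = 0 := by
      rw [two_smul]
      nth_rewrite 1 [this]
      simp
    simpa [smul_eq_zero] using this
  have hsym : ∀ i j, (-(F j i * F j i)).trace = (-(F i j * F i j)).trace := by
    intro i j
    rw [hanti i j]
    simp
  set q : Fin 4 → Fin 4 → ℝ := fun i j => (-(F i j * F i j).trace).re with hq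
  have hfn : fnormSq F = q 0 1 + q 2 3 + (q 0 2 + q 1 3) + (q 0 3 + q 1 2) := by
    unfold fnormSq
    rw [Fin.sum_univ_four]
    simp only [Fin.sum_univ_four]
    have s01 : q 1 0 = q 0 1 := by simp only [hq]; rw [← trace_neg, ← trace_neg, hsym]
    have s02 : q 2 0 = q 0 2 := by simp only [hq]; rw [← trace_neg, ← trace_neg, hsym]
    have s03 : q 3 0 = q 0 3 := by simp only [hq]; rw [← trace_neg, ← trace_neg, hsym]
    have s12 : q 2 1 = q 1 2 := by simp only [hq]; rw [← trace_neg, ← trace_neg, hsym]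
    have s13 : q 3 1 = q 1 3 := by simp only [hq]; rw [← trace_neg, ← trace_neg, hsym]
    have s23 : q 3 2 = q 2 3 := by simp only [hq]; rw [← trace_neg, ← trace_neg, hsym]
    have d0 : q 0 0 = 0 := by simp [hq, hdiag 0]
    have d1 : q 1 1 = 0 := by simp [hq, hdiag 1]
    have d2 : q 2 2 = 0 := by simp [hq, hdiag 2]
    have d3 : q 3 3 = 0 := by simp [hq, hdiag 3]
    simp only [hq] at *
    linarith [s01, s02, s03, s12, s13, s23, d0, d1, d2, d3]
  have k1 := key (F 0 1) (F 2 3) (hskew 0 1) (hskew 2 3)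
  have k2 := key (F 0 2) (F 1 3) (hskew 0 2) (hskew 1 3)
  have k3 := key (F 0 3) (F 1 2) (hskew 0 3) (hskew 1 2)
  have htr : trFF F = 2 * ((F 0 1 * F 2 3).trace).re - 2 * ((F 0 2 * F 1 3).trace).re
      + 2 * ((F 0 3 * F 1 2).trace).re := by
    unfold trFF
    simp [Complex.mul_re, Complex.add_re, Complex.sub_re]
    ring
  rw [hfn, htr]
  have := abs_add_le (2 * ((F 0 1 * F 2 3).trace).re - 2 * ((F 0 2 * F 1 3).trace).re)
      (2 * ((F 0 3 * F 1 2).trace).re)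
  have := abs_sub (2 * ((F 0 1 * F 2 3).trace).re) (2 * ((F 0 2 * F 1 3).trace).re)
  simp only [hq] at *
  calc |2 * ((F 0 1 * F 2 3).trace).re - 2 * ((F 0 2 * F 1 3).trace).re
      + 2 * ((F 0 3 * F 1 2).trace).re|
      ≤ |2 * ((F 0 1 * F 2 3).trace).re| + |2 * ((F 0 2 * F 1 3).trace).re|
        + |2 * ((F 0 3 * F 1 2).trace).re| := by
        have h := abs_add_le (2 * ((F 0 1 * F 2 3).trace).re - 2 * ((F 0 2 * F 1 3).trace).re)
          (2 * ((F 0 3 * F 1 2).trace).re)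
        have h2 := abs_sub (2 * ((F 0 1 * F 2 3).trace).re) (2 * ((F 0 2 * F 1 3).trace).re)
        linarith
    _ ≤ _ := by linarith
end

section
/- Let G = (V, E) be a finite graph with antisymmetric real weight function w on directed edges, a distinguished subset ∂̄ ⊂ V, such that (i) every vertex v outside ∂̄ has integer flux fl(v) = ∑_{(a,v)∈E} w(a,v) ∈ ℤ, (ii) the total flux through ∂̄ is zero, (iii) at each vertex outside ∂̄ all incident weights w(a,v) have the same sign, and (iv) the total absolute weight of edges incident to ∂̄ is strictly less than 1. Then there exists a flow f on G (antisymmetric, |f(a,b)| ≤ |w(a,b)|, conserving flux at all vertices outside ∂̄, matching signs of w on boundary edges) with f(a,b) = w(a,b) on every edge incident to ∂̄. -/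
/-!
Only the flow on interior edges (both endpoints outside `B`) is free: the boundary edges carry `w`,
which leaves at every interior vertex a demand equal to minus its boundary inflow. By Gale's
feasibility theorem (max-flow/min-cut duality: separate the demand vector from the compact convex
set of achievable net inflows, and bound the separating functional by a layer-cake induction), an
interior flow with `|g| ≤ |w|` meeting these demands exists as soon as no vertex set `T` demands
more than the capacity of the interior edges entering it. For the cut condition, let `A` be the
boundary inflow into `T \ B` and `W` the interior inflow across the cut. The boundary inflows sum to
zero and have total mass `< 1`, so `2|A| < 1`; and `A + W` is the flux of `T \ B`, an integer. Hence
either `W = -A` or `|W| ≥ 1 - |A| > |A|`; in both cases the demand `-A` is at most `|W| ≤` the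
capacity.
-/

open Finset

section Gale

variable {V : Type*} [Fintype V]

def netInflow : (V → V → ℝ) →ₗ[ℝ] V → ℝ where
  toFun φ v := ∑ a, (φ a v - φ v a)
  map_add' φ ψ := by
    ext v
    simp only [Pi.add_apply, ← sum_add_distrib]
    exact sum_congr rfl fun a _ => by ring
  map_smul' r φ := by
    ext v
    simp only [Pi.smul_apply, smul_eq_mul, RingHom.id_apply, mul_sum, mul_sub]

def cutCapacity [DecidableEq V] (c : V → V → ℝ) (T : Finset V) : ℝ := ∑ a ∈ Tᶜ, ∑ b ∈ T, c a b

-- For `c ≥ 0`, the support function of `netInflow '' Set.Icc 0 c`, evaluated at `y`.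
def potentialCost (c : V → V → ℝ) (y : V → ℝ) : ℝ := ∑ a, ∑ b, c a b * max (y b - y a) 0

theorem sum_netInflow_mul (φ : V → V → ℝ) (y : V → ℝ) :
    ∑ v, netInflow φ v * y v = ∑ a, ∑ b, φ a b * (y b - y a) := by
  simp only [netInflow, LinearMap.coe_mk, AddHom.coe_mk, sum_mul, sub_mul, mul_sub, sum_sub_distrib]
  rw [sum_comm]

theorem potentialCost_nonneg {c : V → V → ℝ} (hc : ∀ a b, 0 ≤ c a b) (y : V → ℝ) :
    0 ≤ potentialCost c y :=
  sum_nonneg fun a _ => sum_nonneg fun b _ => mul_nonneg (hc a b) (le_max_right _ _)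

theorem max_sub_zero_eq_add_min_max (x y θ : ℝ) :
    max (y - x) 0 = max (min y θ - min x θ) 0 + max (max y θ - max x θ) 0 := by
  simp only [max_def, min_def]
  split_ifs <;> linarith

theorem potentialCost_eq_add_min_max (c : V → V → ℝ) (y : V → ℝ) (θ : ℝ) :
    potentialCost c y =
      potentialCost c (fun v => min (y v) θ) + potentialCost c (fun v => max (y v) θ) := by
  simp only [potentialCost, ← sum_add_distrib, ← mul_add, ← max_sub_zero_eq_add_min_max]

variable [DecidableEq V]

theorem potentialCost_const_add_indicator (c : V → V → ℝ) (θ : ℝ) {s : ℝ} (hs : 0 ≤ s)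
    (T : Finset V) :
    potentialCost c (fun v => θ + if v ∈ T then s else 0) = s * cutCapacity c T := by
  have hterm : ∀ a b,
      c a b * max ((θ + if b ∈ T then s else 0) - (θ + if a ∈ T then s else 0)) 0 =
        if a ∈ Tᶜ then if b ∈ T then s * c a b else 0 else 0 := by
    intro a b
    by_cases ha : a ∈ T <;> by_cases hb : b ∈ T <;> simp [ha, hb, hs, mul_comm]
  simp only [potentialCost, hterm, sum_ite_irrel, sum_const_zero, sum_ite_mem, univ_inter,
    cutCapacity, mul_sum]

variable {c : V → V → ℝ} {D : V → ℝ}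

theorem sum_mul_le_potentialCost_const_add_indicator (hD : ∑ v, D v = 0)
    (hcut : ∀ T, ∑ v ∈ T, D v ≤ cutCapacity c T) (θ : ℝ) {s : ℝ} (hs : 0 ≤ s) (T : Finset V) :
    ∑ v, D v * (θ + if v ∈ T then s else 0) ≤
      potentialCost c (fun v => θ + if v ∈ T then s else 0) := by
  rw [potentialCost_const_add_indicator c θ hs]
  calc ∑ v, D v * (θ + if v ∈ T then s else 0) = (∑ v, D v) * θ + (∑ v ∈ T, D v) * s := by
        simp only [mul_add, mul_ite, mul_zero, sum_add_distrib, sum_ite_mem, univ_inter, sum_mul]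
    _ = s * ∑ v ∈ T, D v := by rw [hD]; ring
    _ ≤ s * cutCapacity c T := mul_le_mul_of_nonneg_left (hcut T) hs

theorem sum_mul_le_potentialCost (hc : ∀ a b, 0 ≤ c a b) (hD : ∑ v, D v = 0)
    (hcut : ∀ T, ∑ v ∈ T, D v ≤ cutCapacity c T) (y : V → ℝ) :
    ∑ v, D v * y v ≤ potentialCost c y := by
  induction hn : #(univ.image y) using Nat.strong_induction_on generalizing y with
  | _ n ih =>
  set I := univ.image y
  have hyI : ∀ v, y v ∈ I := fun v => mem_image_of_mem y (mem_univ v)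
  rcases le_or_gt n 1 with hn1 | hn1
  · obtain ⟨θ, hθ⟩ := card_le_one_iff_subset_singleton.mp (hn ▸ hn1)
    have hy : ∀ v, y v = θ := fun v => mem_singleton.mp (hθ (hyI v))
    calc ∑ v, D v * y v = (∑ v, D v) * θ := by simp only [hy, sum_mul]
      _ = 0 := by rw [hD, zero_mul]
      _ ≤ potentialCost c y := potentialCost_nonneg hc y
  -- `y + θ = min y θ + max y θ` for the second largest value `θ` of `y`: the first summand takes
  -- fewer values, the second only two.
  have hI : I.Nonempty := card_pos.mp (by omega)
  set M := I.max' hI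
  have hI' : (I.erase M).Nonempty := card_pos.mp (by rw [card_erase_of_mem (max'_mem I hI)]; omega)
  set θ := (I.erase M).max' hI'
  have hθM : θ < M := I.lt_max'_of_mem_erase_max' hI (max'_mem _ hI')
  have hy_le : ∀ v, y v ≠ M → y v ≤ θ := fun v hv => le_max' _ _ (mem_erase.mpr ⟨hv, hyI v⟩)
  set T : Finset V := {v | y v = M}
  have hmax : ∀ v, max (y v) θ = θ + if v ∈ T then M - θ else 0 := by
    intro v
    by_cases hv : y v = M
    · simp [T, hv, hθM.le]
    · simp [T, hv, hy_le v hv]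
  have hmin : #(univ.image fun v => min (y v) θ) < n := by
    refine hn ▸ (card_le_card ?_).trans_lt (card_erase_lt_of_mem (max'_mem I hI))
    intro x hx
    obtain ⟨v, -, rfl⟩ := mem_image.mp hx
    by_cases hv : y v = M
    · simpa [hv, hθM.le] using max'_mem _ hI'
    · simpa [hy_le v hv] using mem_erase.mpr ⟨hv, hyI v⟩
  calc ∑ v, D v * y v = ∑ v, D v * (y v + θ) := by
        simp only [mul_add, sum_add_distrib, ← sum_mul, hD, zero_mul, add_zero]
    _ = ∑ v, D v * min (y v) θ + ∑ v, D v * max (y v) θ := by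
        simp only [← min_add_max (y _) θ, mul_add, sum_add_distrib]
    _ ≤ potentialCost c (fun v => min (y v) θ) + potentialCost c (fun v => max (y v) θ) := by
        refine add_le_add (ih _ hmin _ rfl) ?_
        simpa only [hmax] using
          sum_mul_le_potentialCost_const_add_indicator hD hcut θ (sub_nonneg.mpr hθM.le) T
    _ = potentialCost c y := (potentialCost_eq_add_min_max c y θ).symm

theorem exists_flow_of_cut_condition (hc : ∀ a b, 0 ≤ c a b) (hD : ∑ v, D v = 0)
    (hcut : ∀ T, ∑ v ∈ T, D v ≤ cutCapacity c T) :
    ∃ φ ∈ Set.Icc 0 c, netInflow φ = D := by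
  by_contra! hno
  have hDZ : D ∉ netInflow '' Set.Icc 0 c := by
    rintro ⟨φ, hφ, rfl⟩
    exact hno φ hφ rfl
  obtain ⟨f, u, hfZ, hfD⟩ := geometric_hahn_banach_closed_point
    ((convex_Icc 0 c).linear_image netInflow)
    (isCompact_Icc.image netInflow.continuous_of_finiteDimensional).isClosed hDZ
  set y : V → ℝ := fun v => f fun j => if v = j then 1 else 0
  have hf : ∀ x, f x = ∑ v, x v * y v := fun x => by
    simpa using LinearMap.pi_apply_eq_sum_univ f.toLinearMap x
  set φ : V → V → ℝ := fun a b => if y a < y b then c a b else 0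
  have hφ : φ ∈ Set.Icc 0 c := by
    constructor <;> intro a b <;> by_cases h : y a < y b <;> simp [φ, h, hc a b]
  have hfφ : f (netInflow φ) = potentialCost c y := by
    rw [hf, sum_netInflow_mul]
    refine sum_congr rfl fun a _ => sum_congr rfl fun b _ => ?_
    by_cases h : y a < y b
    · simp [φ, h, max_eq_left (sub_nonneg.mpr h.le)]
    · simp [φ, h, max_eq_right (sub_nonpos.mpr (not_lt.mp h))]
  have hDy := sum_mul_le_potentialCost hc hD hcut y
  linarith [hfZ _ ⟨φ, hφ, rfl⟩, hf D]

theorem exists_antisymm_flow_of_cut_condition (hc_symm : ∀ a b, c a b = c b a)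
    (hc : ∀ a b, 0 ≤ c a b) (hD : ∑ v, D v = 0) (hcut : ∀ T, ∑ v ∈ T, D v ≤ cutCapacity c T) :
    ∃ g : V → V → ℝ,
      (∀ a b, g a b = -g b a) ∧ (∀ a b, |g a b| ≤ c a b) ∧ ∀ v, ∑ a, g a v = D v := by
  obtain ⟨φ, ⟨hφ0, hφc⟩, hφD⟩ := exists_flow_of_cut_condition hc hD hcut
  refine ⟨fun a b => φ a b - φ b a, fun a b => (neg_sub _ _).symm, fun a b => ?_, congrFun hφD⟩
  exact abs_sub_le_of_nonneg_of_le (hφ0 a b) (hφc a b) (hφ0 b a) ((hφc b a).trans_eq (hc_symm b a))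

end Gale

theorem two_mul_abs_sum_le_sum_abs {ι : Type*} {s t : Finset ι} (x : ι → ℝ) (hts : t ⊆ s)
    (hs : ∑ i ∈ s, x i = 0) : 2 * |∑ i ∈ t, x i| ≤ ∑ i ∈ s, |x i| := by
  classical
  have hsplit := sum_sdiff hts (f := x)
  have habs := sum_sdiff hts (f := fun i => |x i|)
  have h₁ := abs_sum_le_sum_abs x t
  have h₂ := abs_sum_le_sum_abs x (s \ t)
  rw [abs_eq_abs.mpr (Or.inr (by linarith : ∑ i ∈ s \ t, x i = -∑ i ∈ t, x i))] at h₂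
  linarith

theorem neg_le_abs_of_add_eq_intCast {A W : ℝ} (hA : 2 * |A| < 1) (hAW : ∃ m : ℤ, A + W = m) :
    -A ≤ |W| := by
  obtain ⟨m, hm⟩ := hAW
  rcases eq_or_ne m 0 with rfl | hm0
  · rw [Int.cast_zero, add_eq_zero_iff_neg_eq] at hm
    exact hm ▸ le_abs_self W
  · have h1 : (1 : ℝ) ≤ |(m : ℝ)| := by exact_mod_cast Int.one_le_abs hm0
    have h2 := abs_add_le A W
    rw [hm] at h2
    linarith [neg_le_abs A]

section Antisymm

variable {V : Type*} {f : V → V → ℝ}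

theorem sum_sum_eq_zero_of_antisymm (hf : ∀ a b, f a b = -f b a) (s : Finset V) :
    ∑ a ∈ s, ∑ b ∈ s, f a b = 0 := by
  have h : ∑ a ∈ s, ∑ b ∈ s, f a b = ∑ a ∈ s, ∑ b ∈ s, -f a b := by
    rw [sum_comm]
    exact sum_congr rfl fun a _ => sum_congr rfl fun b _ => hf b a
  simp only [sum_neg_distrib] at h
  linarith

theorem sum_sum_eq_sum_sum_compl_of_antisymm [Fintype V] [DecidableEq V]
    (hf : ∀ a b, f a b = -f b a) (T : Finset V) :
    ∑ v ∈ T, ∑ a, f a v = ∑ v ∈ T, ∑ a ∈ Tᶜ, f a v := by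
  simp only [← sum_add_sum_compl T, sum_add_distrib]
  rw [sum_comm, sum_sum_eq_zero_of_antisymm hf, zero_add]

end Antisymm

section Saturating

variable {V : Type*} [DecidableEq V] (B : Finset V) (w : V → V → ℝ)

def boundaryPart (a b : V) : ℝ := if a ∈ B ∨ b ∈ B then w a b else 0

def interiorPart (a b : V) : ℝ := if a ∈ B ∨ b ∈ B then 0 else w a b

def boundaryDemand [Fintype V] (v : V) : ℝ := if v ∈ B then 0 else -∑ a, boundaryPart B w a v

variable {B w}

theorem boundaryPart_add_interiorPart (a b : V) :
    boundaryPart B w a b + interiorPart B w a b = w a b := by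
  unfold boundaryPart interiorPart
  split_ifs <;> simp

theorem boundaryPart_antisymm (hw : ∀ a b, w a b = -w b a) (a b : V) :
    boundaryPart B w a b = -boundaryPart B w b a := by
  simp only [boundaryPart, or_comm (a := b ∈ B)]
  split_ifs <;> simp [hw a b]

theorem interiorPart_antisymm (hw : ∀ a b, w a b = -w b a) (a b : V) :
    interiorPart B w a b = -interiorPart B w b a := by
  simp only [interiorPart, or_comm (a := b ∈ B)]
  split_ifs <;> simp [hw a b]

theorem interiorPart_eq_zero_of_mem {a b : V} (h : a ∈ B ∨ b ∈ B) : interiorPart B w a b = 0 :=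
  if_pos h

variable [Fintype V]

theorem sum_boundaryDemand_eq (T : Finset V) :
    ∑ v ∈ T, boundaryDemand B w v = -∑ v ∈ T \ B, ∑ a, boundaryPart B w a v := by
  rw [← filter_notMem_eq_sdiff, sum_filter, ← sum_neg_distrib]
  exact sum_congr rfl fun v _ => by by_cases hv : v ∈ B <;> simp [boundaryDemand, hv]

theorem sum_compl_sum_boundaryPart (hw : ∀ a b, w a b = -w b a)
    (hzero : ∑ v ∈ B, ∑ a, w a v = 0) : ∑ v ∈ Bᶜ, ∑ a, boundaryPart B w a v = 0 := by
  have htotal := sum_sum_eq_zero_of_antisymm (boundaryPart_antisymm (B := B) hw) univ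
  have hB : ∑ v ∈ B, ∑ a, boundaryPart B w a v = 0 := by
    rw [← hzero]
    exact sum_congr rfl fun v hv => sum_congr rfl fun a _ => if_pos (Or.inr hv)
  rw [sum_comm, ← sum_add_sum_compl B, hB, zero_add] at htotal
  exact htotal

theorem sum_boundaryDemand (hw : ∀ a b, w a b = -w b a) (hzero : ∑ v ∈ B, ∑ a, w a v = 0) :
    ∑ v, boundaryDemand B w v = 0 := by
  rw [sum_boundaryDemand_eq, ← compl_eq_univ_sdiff, sum_compl_sum_boundaryPart hw hzero, neg_zero]

theorem sum_compl_abs_sum_boundaryPart_lt_one (hsmall : ∑ a ∈ B, ∑ b, |w a b| < 1) :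
    ∑ v ∈ Bᶜ, |∑ a, boundaryPart B w a v| < 1 :=
  calc ∑ v ∈ Bᶜ, |∑ a, boundaryPart B w a v|
      ≤ ∑ v ∈ Bᶜ, ∑ a, |boundaryPart B w a v| := sum_le_sum fun v _ => abs_sum_le_sum_abs _ _
    _ = ∑ a, ∑ v ∈ Bᶜ, |boundaryPart B w a v| := sum_comm
    _ = ∑ a ∈ B, ∑ v ∈ Bᶜ, |boundaryPart B w a v| := by
        refine (sum_subset (subset_univ B) fun a _ ha => sum_eq_zero fun v hv => ?_).symm
        simp [boundaryPart, ha, mem_compl.mp hv]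
    _ ≤ ∑ a ∈ B, ∑ v, |w a v| := sum_le_sum fun a ha => by
        simp only [boundaryPart, if_pos (Or.inl ha)]
        exact sum_le_sum_of_subset_of_nonneg (subset_univ _) fun _ _ _ => abs_nonneg _
    _ < 1 := hsmall

theorem sum_boundaryDemand_le_cutCapacity (hw : ∀ a b, w a b = -w b a)
    (hint : ∀ v ∉ B, ∃ m : ℤ, ∑ a, w a v = m) (hzero : ∑ v ∈ B, ∑ a, w a v = 0)
    (hsmall : ∑ a ∈ B, ∑ b, |w a b| < 1) (T : Finset V) :
    ∑ v ∈ T, boundaryDemand B w v ≤ cutCapacity (fun a b => |interiorPart B w a b|) T := by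
  set A := ∑ v ∈ T \ B, ∑ a, boundaryPart B w a v
  set W := ∑ v ∈ T, ∑ a ∈ Tᶜ, interiorPart B w a v
  have hA : 2 * |A| < 1 :=
    (two_mul_abs_sum_le_sum_abs _ (fun v hv => mem_compl.mpr (mem_sdiff.mp hv).2)
      (sum_compl_sum_boundaryPart hw hzero)).trans_lt (sum_compl_abs_sum_boundaryPart_lt_one hsmall)
  have hflux : ∑ v ∈ T \ B, ∑ a, w a v = A + W := by
    have hB : ∀ v ∈ T, v ∉ T \ B → ∑ a, interiorPart B w a v = 0 := fun v hvT hv =>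
      sum_eq_zero fun a _ => interiorPart_eq_zero_of_mem (Or.inr (by simpa [hvT] using hv))
    simp only [← boundaryPart_add_interiorPart (B := B) (w := w), sum_add_distrib]
    rw [sum_subset sdiff_subset hB, sum_sum_eq_sum_sum_compl_of_antisymm (interiorPart_antisymm hw)]
  have hAW : ∃ m : ℤ, A + W = m := hflux ▸ sum_induction _ (fun x : ℝ => ∃ m : ℤ, x = m)
    (fun _ _ ⟨m, hm⟩ ⟨n, hn⟩ => ⟨m + n, by rw [hm, hn, Int.cast_add]⟩) ⟨0, Int.cast_zero.symm⟩
    (fun v hv => hint v (mem_sdiff.mp hv).2)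
  have hW : |W| ≤ cutCapacity (fun a b => |interiorPart B w a b|) T :=
    calc |W| ≤ ∑ v ∈ T, |∑ a ∈ Tᶜ, interiorPart B w a v| := abs_sum_le_sum_abs _ _
      _ ≤ ∑ v ∈ T, ∑ a ∈ Tᶜ, |interiorPart B w a v| := sum_le_sum fun v _ => abs_sum_le_sum_abs _ _
      _ = cutCapacity (fun a b => |interiorPart B w a b|) T := sum_comm
  rw [sum_boundaryDemand_eq]
  exact (neg_le_abs_of_add_eq_intCast hA hAW).trans hW

end Saturating

theorem exists_saturating_Xbar_flow_general {V : Type} [Fintype V] [DecidableEq V]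
    (B : Finset V) (w : V → V → ℝ)
    (hanti : ∀ a b, w a b = -w b a)
    (hint : ∀ v ∉ B, ∃ m : ℤ, (∑ a, w a v) = (m : ℝ))
    (hzero : (∑ v ∈ B, ∑ a, w a v) = 0)
    (hsmall : (∑ a ∈ B, ∑ b, |w a b|) < 1) :
    ∃ f : V → V → ℝ,
      (∀ a b, f a b = -f b a) ∧
      (∀ a b, |f a b| ≤ |w a b|) ∧
      (∀ v ∉ B, (∑ a, f a v) = 0) ∧
      (∀ a b, a ∈ B ∨ b ∈ B → f a b = w a b) := by
  obtain ⟨g, hg_anti, hg_le, hg_div⟩ := exists_antisymm_flow_of_cut_condition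
    (c := fun a b => |interiorPart B w a b|)
    (fun a b => by rw [interiorPart_antisymm hanti, abs_neg]) (fun _ _ => abs_nonneg _)
    (sum_boundaryDemand hanti hzero) (sum_boundaryDemand_le_cutCapacity hanti hint hzero hsmall)
  have hg_boundary : ∀ a b, a ∈ B ∨ b ∈ B → g a b = 0 := fun a b h =>
    abs_nonpos_iff.mp ((hg_le a b).trans_eq (by rw [interiorPart_eq_zero_of_mem h, abs_zero]))
  refine ⟨fun a b => boundaryPart B w a b + g a b, fun a b => ?_, fun a b => ?_, fun v hv => ?_,
    fun a b h => ?_⟩ <;> beta_reduce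
  · rw [boundaryPart_antisymm hanti, hg_anti, neg_add]
  · by_cases h : a ∈ B ∨ b ∈ B
    · simp [boundaryPart, h, hg_boundary a b h]
    · simpa [boundaryPart, interiorPart, h] using hg_le a b
  · rw [sum_add_distrib, hg_div, boundaryDemand, if_neg hv, add_neg_cancel]
  · rw [hg_boundary a b h, add_zero, boundaryPart, if_pos h]

/-- Proposition 2.6, existence of a saturating X̄-flow:
Let `V` be a finite vertex set with a distinguished boundary set `B`, and
`w` an antisymmetric real weight function (edges being the support of `w`), such that
(i) every vertex outside `B` has integer flux, (ii) the total flux through `B` is zero,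
(iii) at each vertex outside `B` all incident weights have the same sign, and
(iv) the total absolute weight of edges incident to `B` is `< 1`. Then there exists an
antisymmetric flow `f` with `|f| ≤ |w|` edgewise, conserving flux at every vertex
outside `B`, and saturating `B`, i.e. `f = w` on every edge with an endpoint in `B`. -/
theorem exists_saturating_Xbar_flow {V : Type} [Fintype V] [DecidableEq V]
    (B : Finset V) (w : V → V → ℝ)
    (hanti : ∀ a b, w a b = -w b a)
    (hint : ∀ v ∉ B, ∃ m : ℤ, (∑ a, w a v) = (m : ℝ))
    (hzero : (∑ v ∈ B, ∑ a, w a v) = 0)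
    (hsign : ∀ v ∉ B, ∀ a b, 0 ≤ w a v * w b v)
    (hsmall : (∑ a ∈ B, ∑ b, |w a b|) < 1) :
    ∃ f : V → V → ℝ,
      (∀ a b, f a b = -f b a) ∧
      (∀ a b, |f a b| ≤ |w a b|) ∧
      (∀ v ∉ B, (∑ a, f a v) = 0) ∧
      (∀ a b, a ∈ B ∨ b ∈ B → f a b = w a b) :=
  exists_saturating_Xbar_flow_general B w hanti hint hzero hsmall
end
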